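/- arXiv:2409.17511 — 3 statements merged into one kernel-verified Lean document; each statement's English description precedes it below -/
import Mathlib

section
/- If there exists a time T and at most one index j ∈ [n] such that |E_t| − |N_i(t)| ≥ 1 holds for all t ≥ T and all i ∈ [n] with i ≠ j, then x_i(t) converges as t → ∞ for every i ∈ [n]. -/
open Finset
open scoped Classical

/-- The threshold graph `G_t`: social neighbors whose garbage differs by at most `ε`. -/
def Gt {n : ℕ} (G : SimpleGraph (Fin n)) (x : ℕ → Fin n → ℝ) (ε : ℝ) (t : ℕ) :
    SimpleGraph (Fin n) where
  Adj i j := G.Adj i j ∧ |x t i - x t j| ≤ ε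
  symm := by
    constructor
    intro i j h
    exact ⟨h.1.symm, by rw [abs_sub_comm]; exact h.2⟩
  loopless := by
    constructor
    intro i h
    exact G.irrefl h.1

/-- `|E_t|`: the number of edges of `G_t`. -/
noncomputable def Ecard {n : ℕ} (G : SimpleGraph (Fin n)) (x : ℕ → Fin n → ℝ) (ε : ℝ)
    (t : ℕ) : ℕ :=
  (Gt G x ε t).edgeSet.ncard

/-- `N_i(t)`: the neighbors of `i` in `G_t`, as a finset. -/
noncomputable def Nb {n : ℕ} (G : SimpleGraph (Fin n)) (x : ℕ → Fin n → ℝ) (ε : ℝ)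
    (t : ℕ) (i : Fin n) : Finset (Fin n) :=
  Finset.univ.filter fun j => (Gt G x ε t).Adj i j

/-- The update rule of the garbage disposal game. -/
def Update {n : ℕ} (G : SimpleGraph (Fin n)) (x : ℕ → Fin n → ℝ) (ε : ℝ) : Prop :=
  ∀ t i,
    x (t + 1) i =
      (if (Gt G x ε t).edgeSet.Nonempty then (1 : ℝ) else 0) / (Ecard G x ε t : ℝ) *
          ∑ j ∈ Nb G x ε t i, x t j +
        (1 - ((Nb G x ε t i).card : ℝ) / (Ecard G x ε t : ℝ) *
            (if (Gt G x ε t).edgeSet.Nonempty then (1 : ℝ) else 0)) * x t i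

/-- The Lyapunov functional `Z_t`. -/
noncomputable def Z {n : ℕ} (G : SimpleGraph (Fin n)) (x : ℕ → Fin n → ℝ) (ε : ℝ)
    (t : ℕ) : ℝ :=
  ∑ i, ∑ j,
    max (min (ε ^ 2) ((x t i - x t j) ^ 2)) (ε ^ 2 * if ¬ G.Adj i j then 1 else 0)

/-!
Write the update as `x(t+1) = (1 - |E_t|⁻¹ L_t) x(t)`, where `L_t` is the Laplacian of `G_t`; this
matrix is doubly stochastic. Hence, for every `k`, the sum of the `k` smallest coordinates of `x(t)`
is nondecreasing (a fractional choice of total mass `k` never beats the `k` smallest entries) and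
bounded, so it converges, and each `x_i(t)` is the difference of two consecutive such sums. The
degree hypothesis makes `‖x(t)‖²` drop by a fixed fraction of `‖x(t+1) - x(t)‖²`, so the steps tend
to zero, and a sequence with vanishing steps cannot keep jumping between finitely many limits.
-/

open Filter Topology Matrix

section SumSmallest

variable {ι : Type*} [Fintype ι]

/-- Junk value `0` when `k > Fintype.card ι`. -/
noncomputable def sumSmallest (k : ℕ) (y : ι → ℝ) : ℝ :=
  ⨅ A : {A : Finset ι // #A = k}, ∑ i ∈ A.1, y i

def IsBottomSet (y : ι → ℝ) (A : Finset ι) : Prop :=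
  ∀ a ∈ A, ∀ b ∉ A, y a ≤ y b

variable {y : ι → ℝ} {A : Finset ι} {k : ℕ}

lemma sumSmallest_le_sum (hA : #A = k) : sumSmallest k y ≤ ∑ i ∈ A, y i :=
  ciInf_le (Set.finite_range _).bddBelow (⟨A, hA⟩ : {A : Finset ι // #A = k})

lemma exists_sum_eq_sumSmallest (hk : k ≤ Fintype.card ι) :
    ∃ A : Finset ι, #A = k ∧ ∑ i ∈ A, y i = sumSmallest k y := by
  obtain ⟨A, -, hA⟩ := exists_subset_card_eq (s := (univ : Finset ι)) (by simpa using hk)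
  have : Nonempty {A : Finset ι // #A = k} := ⟨⟨A, hA⟩⟩
  obtain ⟨B, hB⟩ := exists_eq_ciInf_of_finite (f := fun A : {A : Finset ι // #A = k} =>
    ∑ i ∈ A.1, y i)
  exact ⟨B.1, B.2, hB⟩

lemma isBottomSet_of_sum_eq_sumSmallest (hA : #A = k) (h : ∑ i ∈ A, y i = sumSmallest k y) :
    IsBottomSet y A := by
  intro a ha b hb
  have hcard : #(insert b (A.erase a)) = k := by
    rw [card_insert_of_notMem fun hb' => hb (mem_of_mem_erase hb'), card_erase_of_mem ha, ← hA]
    have := card_pos.2 ⟨a, ha⟩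
    omega
  have hswap := (sumSmallest_le_sum (y := y) hcard).trans_eq' h.symm
  rw [sum_insert fun hb' => hb (mem_of_mem_erase hb'), ← sum_erase_add A y ha] at hswap
  linarith

/-- The two sides differ by `∑ (c i - 𝟙_A i) (y i - θ)` for a threshold `θ` separating `A` from
its complement, and each term of that sum is nonnegative. -/
lemma IsBottomSet.sum_le_sum_mul (hA : IsBottomSet y A) {c : ι → ℝ} (hc0 : ∀ i, 0 ≤ c i)
    (hc1 : ∀ i, c i ≤ 1) (hc : ∑ i, c i = #A) : ∑ i ∈ A, y i ≤ ∑ i, c i * y i := by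
  obtain ⟨θ, hθA, hθB⟩ : ∃ θ, (∀ a ∈ A, y a ≤ θ) ∧ ∀ b ∉ A, θ ≤ y b := by
    rcases A.eq_empty_or_nonempty with rfl | hne
    · obtain ⟨m, hm⟩ := (Set.finite_range y).bddBelow
      exact ⟨m, by simp, fun b _ => hm ⟨b, rfl⟩⟩
    · exact ⟨A.sup' hne y, fun a ha => le_sup' y ha,
        fun b hb => sup'_le hne y fun a ha => hA a ha b hb⟩
  have hterm : ∀ i, 0 ≤ (c i - if i ∈ A then 1 else 0) * (y i - θ) := by
    intro i
    by_cases hi : i ∈ A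
    · simp only [hi, if_true]
      exact mul_nonneg_of_nonpos_of_nonpos (by linarith [hc1 i]) (by linarith [hθA i hi])
    · simp only [hi, if_false, sub_zero]
      exact mul_nonneg (hc0 i) (by linarith [hθB i hi])
  have hexpand : ∑ i, (c i - if i ∈ A then 1 else 0) * (y i - θ)
      = ∑ i, c i * y i - ∑ i ∈ A, y i - θ * (∑ i, c i - #A) := by
    simp only [sub_mul, mul_sub, ite_mul, one_mul, zero_mul, sum_sub_distrib, sum_ite_mem,
      univ_inter, sum_const, nsmul_eq_mul, ← sum_mul]
    ring
  rw [hc, sub_self, mul_zero, sub_zero] at hexpand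
  linarith [sum_nonneg fun i (_ : i ∈ univ) => hterm i]

lemma IsBottomSet.sumSmallest_eq (hA : IsBottomSet y A) : sumSmallest #A y = ∑ i ∈ A, y i := by
  refine (sumSmallest_le_sum rfl).antisymm ?_
  obtain ⟨B, hB, hBsum⟩ := exists_sum_eq_sumSmallest (y := y) (card_le_univ A)
  calc ∑ i ∈ A, y i ≤ ∑ i, (if i ∈ B then 1 else 0) * y i :=
        hA.sum_le_sum_mul (fun i => by split_ifs <;> norm_num)
          (fun i => by split_ifs <;> norm_num) (by simp [hB])
    _ = sumSmallest #A y := by simp [ite_mul, sum_ite_mem, hBsum]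

lemma exists_eq_sumSmallest_succ_sub (y : ι → ℝ) (i : ι) :
    ∃ k < Fintype.card ι, y i = sumSmallest (k + 1) y - sumSmallest k y := by
  set A := univ.filter fun j => y j < y i
  have hi : i ∉ A := by simp [A]
  have hA : IsBottomSet y A := fun a ha b hb => by
    simp only [A, mem_filter, mem_univ, true_and, not_lt] at ha hb
    linarith
  have hiA : IsBottomSet y (insert i A) := fun a ha b hb => by
    simp only [A, mem_insert, mem_filter, mem_univ, true_and, not_or, not_lt] at ha hb
    rcases ha with rfl | ha <;> linarith [hb.2]
  refine ⟨#A, ?_, ?_⟩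
  · simpa [card_insert_of_notMem hi] using card_le_univ (insert i A)
  · rw [← card_insert_of_notMem hi, hiA.sumSmallest_eq, hA.sumSmallest_eq, sum_insert hi]
    ring

lemma sumSmallest_le_mul_norm (hk : k ≤ Fintype.card ι) : sumSmallest k y ≤ k * ‖y‖ := by
  obtain ⟨A, hA, hAsum⟩ := exists_sum_eq_sumSmallest (y := y) hk
  calc sumSmallest k y = ∑ i ∈ A, y i := hAsum.symm
    _ ≤ ∑ i ∈ A, ‖y‖ := sum_le_sum fun i _ => (Real.le_norm_self _).trans (norm_le_pi_norm y i)
    _ = k * ‖y‖ := by rw [sum_const, hA, nsmul_eq_mul]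

variable [DecidableEq ι]

lemma sumSmallest_le_sumSmallest_mulVec {M : Matrix ι ι ℝ} (hM : M ∈ doublyStochastic ℝ ι)
    (k : ℕ) (y : ι → ℝ) : sumSmallest k y ≤ sumSmallest k (M *ᵥ y) := by
  rcases le_or_gt k (Fintype.card ι) with hk | hk
  · obtain ⟨A, hA, hAsum⟩ := exists_sum_eq_sumSmallest (y := y) hk
    obtain ⟨B, hB, hBsum⟩ := exists_sum_eq_sumSmallest (y := M *ᵥ y) hk
    have hcol : ∀ l, ∑ i ∈ B, M i l ≤ 1 := fun l =>
      (sum_le_univ_sum_of_nonneg fun i => nonneg_of_mem_doublyStochastic hM).trans_eq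
        (sum_col_of_mem_doublyStochastic hM l)
    have hmass : ∑ l, ∑ i ∈ B, M i l = #A := by
      rw [sum_comm]
      simp [sum_row_of_mem_doublyStochastic hM, hA, hB]
    calc sumSmallest k y = ∑ i ∈ A, y i := hAsum.symm
      _ ≤ ∑ l, (∑ i ∈ B, M i l) * y l :=
        (isBottomSet_of_sum_eq_sumSmallest hA hAsum).sum_le_sum_mul
          (fun l => sum_nonneg fun i _ => nonneg_of_mem_doublyStochastic hM) hcol hmass
      _ = ∑ i ∈ B, (M *ᵥ y) i := by
        simp only [mulVec, dotProduct, sum_mul]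
        exact sum_comm
      _ = sumSmallest k (M *ᵥ y) := hBsum
  · have : IsEmpty {A : Finset ι // #A = k} :=
      ⟨fun A => hk.not_ge (A.2 ▸ card_le_univ A.1)⟩
    simp [sumSmallest]

lemma norm_mulVec_le_of_mem_doublyStochastic {M : Matrix ι ι ℝ}
    (hM : M ∈ doublyStochastic ℝ ι) (y : ι → ℝ) : ‖M *ᵥ y‖ ≤ ‖y‖ := by
  refine (pi_norm_le_iff_of_nonneg (norm_nonneg y)).2 fun i => ?_
  calc ‖(M *ᵥ y) i‖ ≤ ∑ j, M i j * ‖y‖ := by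
        refine (norm_sum_le _ _).trans (sum_le_sum fun j _ => ?_)
        rw [norm_mul, Real.norm_of_nonneg (nonneg_of_mem_doublyStochastic hM)]
        exact mul_le_mul_of_nonneg_left (norm_le_pi_norm y j) (nonneg_of_mem_doublyStochastic hM)
    _ = ‖y‖ := by rw [← sum_mul, sum_row_of_mem_doublyStochastic hM, one_mul]

end SumSmallest

lemma tendsto_zero_of_le_mul_sub_succ {a u : ℕ → ℝ} {C : ℝ} {T : ℕ} (hC : 0 ≤ C)
    (ha : ∀ t, 0 ≤ a t) (hu : ∀ t, 0 ≤ u t) (h : ∀ t ≥ T, a t ≤ C * (u t - u (t + 1))) :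
    Tendsto a atTop (𝓝 0) := by
  have htelescope : ∀ N, ∑ s ∈ range N, a (T + s) ≤ C * (u T - u (T + N)) := by
    intro N
    induction N with
    | zero => simp
    | succ N ih =>
      rw [sum_range_succ, ← add_assoc]
      linarith [h (T + N) (Nat.le_add_right T N)]
  have hsummable : Summable fun s => a (T + s) :=
    summable_of_sum_range_le (fun s => ha _) fun N =>
      (htelescope N).trans (mul_le_mul_of_nonneg_left (sub_le_self _ (hu _)) hC)
  rw [← tendsto_add_atTop_iff_nat T]
  simpa only [add_comm] using hsummable.tendsto_atTop_zero

/-- Once the steps are shorter than a third of the minimal gap between distinct limits, `u` can no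
longer switch from one cluster of limits to another. -/
lemma exists_tendsto_of_forall_exists_eq {α ι : Type*} [MetricSpace α] [Finite ι]
    {v : ι → ℕ → α} {c : ι → α} (hv : ∀ k, Tendsto (v k) atTop (𝓝 (c k))) {u : ℕ → α}
    (hu : ∀ t, ∃ k, u t = v k t) (hstep : Tendsto (fun t => dist (u (t + 1)) (u t)) atTop (𝓝 0)) :
    ∃ k, Tendsto u atTop (𝓝 (c k)) := by
  obtain ⟨g, hgap, hg⟩ : ∃ g, (∀ k l, c k ≠ c l → g < dist (c k) (c l)) ∧ 0 < g := by
    refine ((eventually_all.2 fun k => eventually_all.2 fun l => ?_).and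
      self_mem_nhdsWithin).exists (f := 𝓝[>] (0 : ℝ))
    by_cases hkl : c k = c l
    · simp [hkl]
    · exact (eventually_lt_nhds (dist_pos.2 hkl)).filter_mono nhdsWithin_le_nhds
        |>.mono fun _ h _ => h
  have hnear : ∀ η > 0, ∀ᶠ t in atTop, ∀ k, dist (v k t) (c k) < η := fun η hη =>
    eventually_all.2 fun k => (hv k).eventually (Metric.ball_mem_nhds _ hη)
  obtain ⟨N, hN⟩ := eventually_atTop.1 ((hnear (g / 3) (by positivity)).and
    (hstep.eventually (gt_mem_nhds (by positivity : (0 : ℝ) < g / 3))))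
  have hsame : ∀ t ≥ N, ∀ t' ≥ N, dist (u t) (u t') < g / 3 →
      ∀ k l, u t = v k t → u t' = v l t' → c k = c l := by
    intro t ht t' ht' hdist k l hk hl
    by_contra hne
    have hkt : dist (c k) (u t) < g / 3 := by rw [hk, dist_comm]; exact (hN t ht).1 k
    have hlt : dist (u t') (c l) < g / 3 := by rw [hl]; exact (hN t' ht').1 l
    linarith [dist_triangle4 (c k) (u t) (u t') (c l), hgap k l hne]
  obtain ⟨k₀, hk₀⟩ := hu N
  have hcluster : ∀ t ≥ N, ∀ k, u t = v k t → c k = c k₀ := by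
    intro t ht
    induction t, ht using Nat.le_induction with
    | base => exact fun k hk => hsame N le_rfl N le_rfl (by simp [hg]) k k₀ hk hk₀
    | succ t ht ih =>
      obtain ⟨l, hl⟩ := hu t
      intro k hk
      rw [← ih l hl]
      exact hsame (t + 1) (by omega) t ht (hN t ht).2 k l hk hl
  refine ⟨k₀, Metric.tendsto_atTop.2 fun η hη => ?_⟩
  obtain ⟨N', hN'⟩ := eventually_atTop.1 (hnear η hη)
  refine ⟨max N N', fun t ht => ?_⟩
  obtain ⟨k, hk⟩ := hu t
  rw [hk, ← hcluster t (le_of_max_le_left ht) k hk]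
  exact hN' t (le_of_max_le_right ht) k

namespace SimpleGraph

variable {V : Type*} [Fintype V] [DecidableEq V] (H : SimpleGraph V) [DecidableRel H.Adj]

lemma lapMatrix_mulVec_apply_eq_sum (x : V → ℝ) (i : V) :
    (H.lapMatrix ℝ *ᵥ x) i = ∑ k ∈ H.neighborFinset i, (x i - x k) := by
  rw [lapMatrix_mulVec_apply, sum_sub_distrib, sum_const, card_neighborFinset_eq_degree,
    nsmul_eq_mul]

lemma two_mul_dotProduct_lapMatrix_mulVec (x : V → ℝ) :
    2 * (x ⬝ᵥ (H.lapMatrix ℝ *ᵥ x)) = ∑ i, ∑ k ∈ H.neighborFinset i, (x i - x k) ^ 2 := by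
  rw [← toLinearMap₂'_apply', lapMatrix_toLinearMap₂', mul_div_cancel₀ _ two_ne_zero]
  simp [neighborFinset_eq_filter, sum_filter]

lemma one_sub_inv_card_edgeFinset_smul_lapMatrix_mem_doublyStochastic :
    1 - (#H.edgeFinset : ℝ)⁻¹ • H.lapMatrix ℝ ∈ doublyStochastic ℝ V := by
  have hconst : H.lapMatrix ℝ *ᵥ 1 = 0 := H.lapMatrix_mulVec_const_eq_zero
  refine mem_doublyStochastic.2 ⟨fun i j => ?_, ?_, ?_⟩
  · rcases eq_or_ne i j with rfl | hij
    · have hdeg : (H.degree i : ℝ) ≤ #H.edgeFinset := by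
        exact_mod_cast H.degree_le_card_edgeFinset i
      simp only [Matrix.sub_apply, one_apply_eq, Matrix.smul_apply, smul_eq_mul, lapMatrix,
        degMatrix, diagonal_apply_eq, adjMatrix_apply, H.loopless.irrefl i, if_false, sub_zero]
      rcases (Nat.cast_nonneg (α := ℝ) #H.edgeFinset).eq_or_lt with he | he
      · simp [← he]
      · rw [sub_nonneg, inv_mul_le_iff₀ he, mul_one]
        exact hdeg
    · simp [lapMatrix, degMatrix, adjMatrix_apply, hij, one_apply_ne hij]
      split_ifs <;> positivity
  · rw [sub_mulVec, one_mulVec, smul_mulVec, hconst, smul_zero, sub_zero]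
  · rw [vecMul_sub, vecMul_one, vecMul_smul, ← (H.isSymm_lapMatrix ℝ).eq, vecMul_transpose,
      hconst, smul_zero, sub_zero]

/-- By Cauchy–Schwarz `‖L x‖² ≤ ∑ᵢ deg i · Pᵢ` with `Pᵢ = ∑_{k ∼ i} (xᵢ - x_k)²`; every vertex
but `j` has degree at most `|E| - 1`, and the exceptional `P_j` is at most half of
`∑ᵢ Pᵢ = 2 xᵀ L x`. -/
lemma lapMatrix_mulVec_dotProduct_self_le {j : V} (hdeg : ∀ i ≠ j, H.degree i + 1 ≤ #H.edgeFinset)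
    (x : V → ℝ) : (H.lapMatrix ℝ *ᵥ x) ⬝ᵥ (H.lapMatrix ℝ *ᵥ x)
      ≤ (2 * #H.edgeFinset - 1) * (x ⬝ᵥ (H.lapMatrix ℝ *ᵥ x)) := by
  set e : ℝ := (#H.edgeFinset : ℝ)
  set P : V → ℝ := fun i => ∑ k ∈ H.neighborFinset i, (x i - x k) ^ 2
  have hP0 : ∀ i, 0 ≤ P i := fun i => sum_nonneg fun k _ => sq_nonneg _
  have hPj : 2 * P j ≤ ∑ i, P i := by
    have hle : P j ≤ ∑ i ∈ univ.erase j, P i :=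
      calc P j ≤ ∑ k ∈ H.neighborFinset j, P k := sum_le_sum fun k hk => by
            rw [← neg_sub, neg_sq]
            exact single_le_sum (f := fun l => (x k - x l) ^ 2) (fun l _ => sq_nonneg _)
              (by simpa [adj_comm] using hk)
        _ ≤ ∑ i ∈ univ.erase j, P i :=
          sum_le_sum_of_subset_of_nonneg
            (fun k hk => by simpa using ((mem_neighborFinset ..).1 hk).ne') fun i _ _ => hP0 i
    linarith [add_sum_erase univ P (mem_univ j)]
  have hdegP : ∀ i, H.degree i * P i ≤ (e - 1) * P i + if i = j then P i else 0 := by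
    intro i
    split_ifs with hij
    · subst hij
      have : (H.degree i : ℝ) ≤ e := Nat.cast_le.2 (H.degree_le_card_edgeFinset i)
      nlinarith [hP0 i]
    · have : (H.degree i : ℝ) + 1 ≤ e := by
        simpa only [Nat.cast_add, Nat.cast_one] using (Nat.cast_le (α := ℝ)).2 (hdeg i hij)
      nlinarith [hP0 i]
  have hQ : x ⬝ᵥ (H.lapMatrix ℝ *ᵥ x) = (∑ i, P i) / 2 := by
    linarith [H.two_mul_dotProduct_lapMatrix_mulVec x]
  calc (H.lapMatrix ℝ *ᵥ x) ⬝ᵥ (H.lapMatrix ℝ *ᵥ x)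
      = ∑ i, (∑ k ∈ H.neighborFinset i, (x i - x k)) ^ 2 := by
        simp only [dotProduct, lapMatrix_mulVec_apply_eq_sum, sq]
    _ ≤ ∑ i, H.degree i * P i := sum_le_sum fun i _ => by
        rw [← card_neighborFinset_eq_degree]
        exact sq_sum_le_card_mul_sum_sq
    _ ≤ ∑ i, ((e - 1) * P i + if i = j then P i else 0) := sum_le_sum fun i _ => hdegP i
    _ = (e - 1) * ∑ i, P i + P j := by rw [sum_add_distrib, ← mul_sum, sum_ite_eq' univ j P,
        if_pos (mem_univ j)]
    _ ≤ (2 * e - 1) * (x ⬝ᵥ (H.lapMatrix ℝ *ᵥ x)) := by rw [hQ]; linarith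

lemma dotProduct_self_le_mul_sub_of_eq_inv_smul {j : V}
    (hdeg : ∀ i ≠ j, H.degree i + 1 ≤ #H.edgeFinset) {C : ℝ} (hC : 2 * #H.edgeFinset - 1 ≤ C)
    {x d : V → ℝ} (hd : d = (#H.edgeFinset : ℝ)⁻¹ • (H.lapMatrix ℝ *ᵥ x)) :
    d ⬝ᵥ d ≤ C * (x ⬝ᵥ x - (x - d) ⬝ᵥ (x - d)) := by
  set e : ℝ := (#H.edgeFinset : ℝ)
  set Lx := H.lapMatrix ℝ *ᵥ x
  rcases (show 0 ≤ e from Nat.cast_nonneg _).eq_or_lt with he | he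
  · simp [hd, ← he]
  have hQ : 0 ≤ x ⬝ᵥ Lx := by
    have hsq : 0 ≤ ∑ i, ∑ k ∈ H.neighborFinset i, (x i - x k) ^ 2 :=
      sum_nonneg fun i _ => sum_nonneg fun k _ => sq_nonneg _
    linarith [H.two_mul_dotProduct_lapMatrix_mulVec x]
  have hLx := H.lapMatrix_mulVec_dotProduct_self_le hdeg x
  have hdd : d ⬝ᵥ d = e⁻¹ ^ 2 * (Lx ⬝ᵥ Lx) := by
    rw [hd, smul_dotProduct, dotProduct_smul, smul_eq_mul, smul_eq_mul]; ring
  have hdiff : x ⬝ᵥ x - (x - d) ⬝ᵥ (x - d) = 2 * e⁻¹ * (x ⬝ᵥ Lx) - e⁻¹ ^ 2 * (Lx ⬝ᵥ Lx) := by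
    rw [hd]
    simp only [sub_dotProduct, dotProduct_sub, smul_dotProduct, dotProduct_smul, smul_eq_mul,
      dotProduct_comm Lx x]
    ring
  rw [hdd, hdiff]
  have h1 : 0 ≤ (C + 1) * e⁻¹ ^ 2 * ((2 * e - 1) * (x ⬝ᵥ Lx) - Lx ⬝ᵥ Lx) :=
    mul_nonneg (mul_nonneg (by linarith) (sq_nonneg _)) (sub_nonneg.2 hLx)
  have h2 : 0 ≤ e⁻¹ ^ 2 * (x ⬝ᵥ Lx) * (C + 1 - 2 * e) :=
    mul_nonneg (mul_nonneg (sq_nonneg _) hQ) (by linarith)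
  have hinv : e⁻¹ * e = 1 := inv_mul_cancel₀ he.ne'
  linear_combination h1 + h2 + (2 * C * e⁻¹ * (x ⬝ᵥ Lx)) * hinv

end SimpleGraph

section GarbageDisposal

variable {n : ℕ} {G : SimpleGraph (Fin n)} {x : ℕ → Fin n → ℝ} {ε : ℝ}

lemma Nb_eq_neighborFinset (t : ℕ) (i : Fin n) :
    Nb G x ε t i = (Gt G x ε t).neighborFinset i := by
  ext k
  simp [Nb]

lemma Ecard_eq_card_edgeFinset (t : ℕ) : Ecard G x ε t = #(Gt G x ε t).edgeFinset := by
  rw [Ecard, ← SimpleGraph.coe_edgeFinset, Set.ncard_coe_finset]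

/-- The indicator `𝟙{E_t ≠ ∅}` in the update rule is redundant, because `0⁻¹ = 0`. -/
lemma ite_edgeSet_nonempty_div_Ecard (t : ℕ) :
    (if (Gt G x ε t).edgeSet.Nonempty then (1 : ℝ) else 0) / Ecard G x ε t
      = (Ecard G x ε t : ℝ)⁻¹ := by
  split_ifs with h
  · exact one_div _
  · rw [Set.not_nonempty_iff_eq_empty] at h
    simp [Ecard, h]

namespace Update

lemma eq_sub_inv_smul_lapMatrix_mulVec (hupd : Update G x ε) (t : ℕ) :
    x (t + 1) = x t - (Ecard G x ε t : ℝ)⁻¹ • ((Gt G x ε t).lapMatrix ℝ *ᵥ x t) := by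
  ext i
  rw [hupd t i, ite_edgeSet_nonempty_div_Ecard, div_mul_comm, ite_edgeSet_nonempty_div_Ecard,
    Pi.sub_apply, Pi.smul_apply, SimpleGraph.lapMatrix_mulVec_apply, Nb_eq_neighborFinset,
    SimpleGraph.card_neighborFinset_eq_degree, smul_eq_mul]
  ring

lemma eq_mulVec (hupd : Update G x ε) (t : ℕ) : x (t + 1) =
    (1 - (#(Gt G x ε t).edgeFinset : ℝ)⁻¹ • (Gt G x ε t).lapMatrix ℝ) *ᵥ x t := by
  rw [hupd.eq_sub_inv_smul_lapMatrix_mulVec, sub_mulVec, one_mulVec, smul_mulVec,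
    Ecard_eq_card_edgeFinset]

lemma norm_le_norm_zero (hupd : Update G x ε) (t : ℕ) : ‖x t‖ ≤ ‖x 0‖ := by
  induction t with
  | zero => rfl
  | succ t ih =>
    rw [hupd.eq_mulVec]
    exact (norm_mulVec_le_of_mem_doublyStochastic
      (SimpleGraph.one_sub_inv_card_edgeFinset_smul_lapMatrix_mem_doublyStochastic _) _).trans ih

lemma tendsto_sumSmallest (hupd : Update G x ε) {k : ℕ} (hk : k ≤ n) :
    Tendsto (fun t => sumSmallest k (x t)) atTop (𝓝 (⨆ t, sumSmallest k (x t))) := by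
  refine tendsto_atTop_ciSup (monotone_nat_of_le_succ fun t => ?_) ⟨k * ‖x 0‖, ?_⟩
  · rw [hupd.eq_mulVec]
    exact sumSmallest_le_sumSmallest_mulVec
      (SimpleGraph.one_sub_inv_card_edgeFinset_smul_lapMatrix_mem_doublyStochastic _) k (x t)
  · rintro _ ⟨t, rfl⟩
    exact (sumSmallest_le_mul_norm (by simpa using hk)).trans
      (mul_le_mul_of_nonneg_left (hupd.norm_le_norm_zero t) k.cast_nonneg)

lemma tendsto_dist_succ (hupd : Update G x ε) {T : ℕ} {j : Fin n}
    (hdeg : ∀ t, T ≤ t → ∀ i : Fin n, i ≠ j → (Nb G x ε t i).card + 1 ≤ Ecard G x ε t)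
    (i : Fin n) : Tendsto (fun t => dist (x (t + 1) i) (x t i)) atTop (𝓝 0) := by
  have hdecrease : ∀ t ≥ T, (x t - x (t + 1)) ⬝ᵥ (x t - x (t + 1))
      ≤ 2 * n.choose 2 * (x t ⬝ᵥ x t - x (t + 1) ⬝ᵥ x (t + 1)) := by
    intro t ht
    have hE : #(Gt G x ε t).edgeFinset ≤ n.choose 2 := by
      simpa using SimpleGraph.card_edgeFinset_le_card_choose_two (G := Gt G x ε t)
    rw [hupd.eq_sub_inv_smul_lapMatrix_mulVec t, sub_sub_cancel, Ecard_eq_card_edgeFinset]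
    refine (Gt G x ε t).dotProduct_self_le_mul_sub_of_eq_inv_smul (j := j) (fun i hij => ?_)
      (by linarith [(Nat.cast_le (α := ℝ)).2 hE]) rfl
    simpa [Nb_eq_neighborFinset, Ecard_eq_card_edgeFinset] using hdeg t ht i hij
  have hsq := tendsto_zero_of_le_mul_sub_succ (by positivity)
    (fun t => sum_nonneg fun i _ => mul_self_nonneg _)
    (fun t => sum_nonneg fun i _ => mul_self_nonneg _) hdecrease
  refine squeeze_zero (fun t => dist_nonneg) (fun t => ?_) (by simpa using hsq.sqrt)
  rw [Real.dist_eq, ← Real.sqrt_sq_eq_abs]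
  refine Real.sqrt_le_sqrt ?_
  rw [← neg_sub, neg_sq, sq]
  exact single_le_sum (f := fun l => (x t - x (t + 1)) l * (x t - x (t + 1)) l)
    (fun l _ => mul_self_nonneg _) (mem_univ i)

end Update

end GarbageDisposal

theorem asymptotic_stability_all_general {n : ℕ} (G : SimpleGraph (Fin n)) (x : ℕ → Fin n → ℝ)
    (ε : ℝ) (hupd : Update G x ε)
    (h : ∃ T : ℕ, ∃ j : Fin n, ∀ t, T ≤ t → ∀ i : Fin n, i ≠ j →
      (Nb G x ε t i).card + 1 ≤ Ecard G x ε t) :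
    ∀ i : Fin n, ∃ L : ℝ, Filter.Tendsto (fun t => x t i) Filter.atTop (nhds L) := by
  obtain ⟨T, j, hdeg⟩ := h
  intro i
  have hrank : ∀ t, ∃ k : Fin n, x t i = sumSmallest (k + 1) (x t) - sumSmallest k (x t) := by
    intro t
    obtain ⟨k, hk, hxi⟩ := exists_eq_sumSmallest_succ_sub (x t) i
    exact ⟨⟨k, by simpa using hk⟩, hxi⟩
  obtain ⟨k, hk⟩ := exists_tendsto_of_forall_exists_eq
    (fun k => (hupd.tendsto_sumSmallest k.2).sub (hupd.tendsto_sumSmallest k.2.le)) hrank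
    (hupd.tendsto_dist_succ hdeg i)
  exact ⟨_, hk⟩

/-- Lemma 5: all `x_i(t)` converge if at most one index fails `|E_t| − |N_i(t)| ≥ 1`
after some time. -/
theorem asymptotic_stability_all {n : ℕ} (G : SimpleGraph (Fin n)) (x : ℕ → Fin n → ℝ)
    (ε : ℝ) (hε : 0 < ε) (hx0 : ∀ i, 0 ≤ x 0 i) (hupd : Update G x ε)
    (h : ∃ T : ℕ, ∃ j : Fin n, ∀ t, T ≤ t → ∀ i : Fin n, i ≠ j →
      (Nb G x ε t i).card + 1 ≤ Ecard G x ε t) :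
    ∀ i : Fin n, ∃ L : ℝ, Filter.Tendsto (fun t => x t i) Filter.atTop (nhds L) :=
  asymptotic_stability_all_general G x ε hupd h
end

section
/- Let Z_t = ∑_{i,j ∈ [n]} [ε² ∧ (x_i(t) − x_j(t))²] ∨ (ε²·𝟙{(i,j) ∉ E}). Then (Z_t)_{t ≥ 0} is a nonnegative nonincreasing sequence and hence converges as t → ∞. -/
/-! On the threshold graph `G_t` the update is an explicit Euler step `x ↦ x - |E_t|⁻¹ L_t x` of
the heat equation for the Laplacian `L_t` of `G_t`, and since every degree is at most `|E_t|`,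
such a step does not increase the Dirichlet energy `∑_{i ∼ j} (x_i - x_j)²` of `G_t`.
The summands of `Z_t` off the edges of `G_t` take their largest possible value `ε²`, and on the
edges of `G_t` they are the squared differences, so `Z_{t+1} - Z_t` is bounded by the change of
that energy. -/

open Finset
open scoped Classical

namespace SimpleGraph

variable {V : Type*} [Fintype V] (H : SimpleGraph V)

noncomputable def dirichletEnergy (f : V → ℝ) : ℝ :=
  ∑ i, ∑ j ∈ H.neighborFinset i, (f i - f j) ^ 2

noncomputable def diffusionStep (s : ℝ) (f : V → ℝ) : V → ℝ :=
  fun i => f i + s * ∑ j ∈ H.neighborFinset i, (f j - f i)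

theorem sum_neighborFinset_comm (F : V → V → ℝ) :
    ∑ i, ∑ j ∈ H.neighborFinset i, F i j = ∑ i, ∑ j ∈ H.neighborFinset i, F j i := by
  simp only [neighborFinset_eq_filter, sum_filter]
  rw [sum_comm]
  simp only [H.adj_comm]

/-- Discrete Green identity. -/
theorem sum_neighborFinset_sub_mul_sub (f g : V → ℝ) :
    ∑ i, ∑ j ∈ H.neighborFinset i, (f i - f j) * (g i - g j) =
      -2 * ∑ i, g i * ∑ j ∈ H.neighborFinset i, (f j - f i) := by
  calc ∑ i, ∑ j ∈ H.neighborFinset i, (f i - f j) * (g i - g j)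
      = ∑ i, ∑ j ∈ H.neighborFinset i, (f i - f j) * g i
        - ∑ i, ∑ j ∈ H.neighborFinset i, (f i - f j) * g j := by
        simp only [mul_sub, sum_sub_distrib]
    _ = ∑ i, ∑ j ∈ H.neighborFinset i, ((f i - f j) * g i - (f j - f i) * g i) := by
        rw [H.sum_neighborFinset_comm fun i j => (f i - f j) * g j]
        simp only [sum_sub_distrib]
    _ = -2 * ∑ i, g i * ∑ j ∈ H.neighborFinset i, (f j - f i) := by
        simp only [mul_sum]
        exact sum_congr rfl fun i _ => sum_congr rfl fun j _ => by ring

theorem sum_neighborFinset_sub_sq_le (g : V → ℝ) :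
    ∑ i, ∑ j ∈ H.neighborFinset i, (g i - g j) ^ 2 ≤ 4 * ∑ i, H.degree i * g i ^ 2 := by
  calc ∑ i, ∑ j ∈ H.neighborFinset i, (g i - g j) ^ 2
      ≤ ∑ i, ∑ j ∈ H.neighborFinset i, (2 * g i ^ 2 + 2 * g j ^ 2) := by
        gcongr with i _ j _
        nlinarith [sq_nonneg (g i + g j)]
    _ = 4 * ∑ i, H.degree i * g i ^ 2 := by
        simp only [sum_add_distrib]
        rw [H.sum_neighborFinset_comm fun i j => 2 * g j ^ 2, ← two_mul, mul_sum, mul_sum]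
        refine sum_congr rfl fun i _ => ?_
        rw [sum_const, card_neighborFinset_eq_degree, nsmul_eq_mul]
        ring

theorem dirichletEnergy_diffusionStep_le {s : ℝ} (hs : 0 ≤ s) (hdeg : ∀ i, s * H.degree i ≤ 1)
    (f : V → ℝ) : H.dirichletEnergy (H.diffusionStep s f) ≤ H.dirichletEnergy f := by
  set y : V → ℝ := fun i => ∑ j ∈ H.neighborFinset i, (f j - f i)
  have hstep : ∀ i, H.diffusionStep s f i = f i + s * y i := fun i => rfl
  have hexpand : H.dirichletEnergy (H.diffusionStep s f) = H.dirichletEnergy f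
      + 2 * s * ∑ i, ∑ j ∈ H.neighborFinset i, (f i - f j) * (y i - y j)
      + s ^ 2 * ∑ i, ∑ j ∈ H.neighborFinset i, (y i - y j) ^ 2 := by
    simp only [dirichletEnergy, hstep, mul_sum, ← sum_add_distrib]
    exact sum_congr rfl fun i _ => sum_congr rfl fun j _ => by ring
  have hdeg' : s * ∑ i, H.degree i * y i ^ 2 ≤ ∑ i, y i ^ 2 := by
    rw [mul_sum]
    refine sum_le_sum fun i _ => ?_
    rw [← mul_assoc]
    exact mul_le_of_le_one_left (sq_nonneg _) (hdeg i)
  have hquad := H.sum_neighborFinset_sub_sq_le y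
  have hcross : ∑ i, y i * ∑ j ∈ H.neighborFinset i, (f j - f i) = ∑ i, y i ^ 2 :=
    sum_congr rfl fun i _ => (sq (y i)).symm
  rw [hexpand, H.sum_neighborFinset_sub_mul_sub f y, hcross]
  nlinarith [mul_le_mul_of_nonneg_left hquad (sq_nonneg s), mul_le_mul_of_nonneg_left hdeg' hs]

end SimpleGraph

section GarbageDisposal

variable {n : ℕ} {G : SimpleGraph (Fin n)} {x : ℕ → Fin n → ℝ} {ε : ℝ}

theorem degree_Gt_le_Ecard (t : ℕ) (i : Fin n) : (Gt G x ε t).degree i ≤ Ecard G x ε t := by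
  rw [Ecard, Set.ncard_eq_toFinset_card']
  exact (Gt G x ε t).degree_le_card_edgeFinset i

/-- When `G_t` has no edges, `|E_t| = 0` and both sides reduce to `x t`, since `0⁻¹ = 0`. -/
theorem Update.succ_eq_diffusionStep (hupd : Update G x ε) (t : ℕ) :
    x (t + 1) = (Gt G x ε t).diffusionStep (Ecard G x ε t)⁻¹ (x t) := by
  funext i
  have hNb : Nb G x ε t i = (Gt G x ε t).neighborFinset i :=
    (SimpleGraph.neighborFinset_eq_filter _).symm
  rw [hupd t i, hNb, SimpleGraph.diffusionStep, sum_sub_distrib, sum_const, nsmul_eq_mul,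
    (Gt G x ε t).card_neighborFinset_eq_degree]
  split_ifs with h
  · ring
  · have hE : Ecard G x ε t = 0 := by
      rw [Ecard, Set.not_nonempty_iff_eq_empty.mp h, Set.ncard_empty]
    simp [hE]

theorem Update.dirichletEnergy_succ_le (hupd : Update G x ε) (t : ℕ) :
    (Gt G x ε t).dirichletEnergy (x (t + 1)) ≤ (Gt G x ε t).dirichletEnergy (x t) := by
  rw [hupd.succ_eq_diffusionStep t]
  refine (Gt G x ε t).dirichletEnergy_diffusionStep_le (by positivity) (fun i => ?_) (x t)
  exact inv_mul_le_one_of_le₀ (by exact_mod_cast degree_Gt_le_Ecard t i) (Nat.cast_nonneg _)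

theorem max_min_sq_sub_max_min_sq_le {a b : ℝ} (hε : 0 ≤ ε) (P : Prop) :
    max (min (ε ^ 2) (b ^ 2)) (ε ^ 2 * if ¬P then 1 else 0)
        - max (min (ε ^ 2) (a ^ 2)) (ε ^ 2 * if ¬P then 1 else 0)
      ≤ if P ∧ |a| ≤ ε then b ^ 2 - a ^ 2 else 0 := by
  by_cases hP : P
  · have hmax : ∀ c : ℝ,
        max (min (ε ^ 2) (c ^ 2)) (ε ^ 2 * if ¬P then 1 else 0) = min (ε ^ 2) (c ^ 2) := by
      intro c
      rw [if_neg (not_not_intro hP), mul_zero]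
      exact max_eq_left (le_min (sq_nonneg _) (sq_nonneg _))
    rw [hmax, hmax]
    by_cases ha : |a| ≤ ε
    · have hmin : min (ε ^ 2) (a ^ 2) = a ^ 2 :=
        min_eq_right (sq_le_sq.mpr (by rwa [abs_of_nonneg hε]))
      rw [if_pos ⟨hP, ha⟩, hmin]
      linarith [min_le_right (ε ^ 2) (b ^ 2)]
    · have hmin : min (ε ^ 2) (a ^ 2) = ε ^ 2 :=
        min_eq_left (sq_le_sq.mpr (by rw [abs_of_nonneg hε]; linarith))
      rw [if_neg fun h => ha h.2, hmin]
      linarith [min_le_left (ε ^ 2) (b ^ 2)]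
  · have hmax : ∀ c : ℝ, max (min (ε ^ 2) (c ^ 2)) (ε ^ 2 * if ¬P then 1 else 0) = ε ^ 2 := by
      intro c
      rw [if_pos hP, mul_one]
      exact max_eq_right (min_le_left _ _)
    rw [hmax, hmax, sub_self, if_neg fun h => hP h.1]

theorem Z_succ_sub_le (hε : 0 ≤ ε) (t : ℕ) :
    Z G x ε (t + 1) - Z G x ε t
      ≤ (Gt G x ε t).dirichletEnergy (x (t + 1)) - (Gt G x ε t).dirichletEnergy (x t) := by
  simp only [Z, SimpleGraph.dirichletEnergy, SimpleGraph.neighborFinset_eq_filter, sum_filter,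
    ← sum_sub_distrib]
  refine sum_le_sum fun i _ => sum_le_sum fun j _ => ?_
  refine (max_min_sq_sub_max_min_sq_le hε (G.Adj i j)).trans_eq ?_
  have hAdj : (Gt G x ε t).Adj i j ↔ G.Adj i j ∧ |x t i - x t j| ≤ ε := Iff.rfl
  simp only [hAdj]
  split_ifs <;> ring

theorem Z_nonneg (t : ℕ) : 0 ≤ Z G x ε t :=
  sum_nonneg fun _ _ => sum_nonneg fun _ _ =>
    le_max_of_le_left (le_min (sq_nonneg _) (sq_nonneg _))

end GarbageDisposal

theorem Z_monotone_convergent_general {n : ℕ} (G : SimpleGraph (Fin n)) (x : ℕ → Fin n → ℝ)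
    (ε : ℝ) (hε : 0 < ε) (hupd : Update G x ε) :
    (∀ t, 0 ≤ Z G x ε t) ∧ (∀ t, Z G x ε (t + 1) ≤ Z G x ε t) ∧
      ∃ L : ℝ, Filter.Tendsto (fun t => Z G x ε t) Filter.atTop (nhds L) := by
  have hZ_succ_le : ∀ t, Z G x ε (t + 1) ≤ Z G x ε t := fun t => by
    linarith [Z_succ_sub_le (x := x) (G := G) hε.le t, hupd.dirichletEnergy_succ_le t]
  refine ⟨Z_nonneg, hZ_succ_le, _, tendsto_atTop_ciInf (antitone_nat_of_succ_le hZ_succ_le) ?_⟩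
  exact ⟨0, Set.forall_mem_range.mpr Z_nonneg⟩

/-- `(Z_t)` is nonnegative and nonincreasing, hence converges. -/
theorem Z_monotone_convergent {n : ℕ} (G : SimpleGraph (Fin n)) (x : ℕ → Fin n → ℝ)
    (ε : ℝ) (hε : 0 < ε) (hx0 : ∀ i, 0 ≤ x 0 i) (hupd : Update G x ε) :
    (∀ t, 0 ≤ Z G x ε t) ∧ (∀ t, Z G x ε (t + 1) ≤ Z G x ε t) ∧
      ∃ L : ℝ, Filter.Tendsto (fun t => Z G x ε t) Filter.atTop (nhds L) :=
  Z_monotone_convergent_general G x ε hε hupd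
end

section
/- If the graph G_s is ε-trivial at some time s ≥ 0 (i.e., |x_i(s) − x_j(s)| ≤ ε for all i, j ∈ [n]), then G_t = G (i.e., E_t = E) for all t ≥ s. -/
open Finset
open scoped Classical

/-! The update replaces `x_i` by a convex combination of `x_i` and the values of its neighbours in
`G_t`, so the interval spanned by the values never grows, and an ε-trivial state stays ε-trivial;
in an ε-trivial state every social edge is within the confidence threshold. -/

lemma SimpleGraph.degree_le_ncard_edgeSet {V : Type*} [Fintype V] (H : SimpleGraph V)
    [DecidableRel H.Adj] (v : V) : H.degree v ≤ H.edgeSet.ncard := by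
  rw [← H.coe_edgeFinset, Set.ncard_coe_finset]
  exact H.degree_le_card_edgeFinset v

lemma card_Nb_le_Ecard {n : ℕ} (G : SimpleGraph (Fin n)) (x : ℕ → Fin n → ℝ) (ε : ℝ)
    (t : ℕ) (i : Fin n) : (Nb G x ε t i).card ≤ Ecard G x ε t := by
  rw [Nb, ← SimpleGraph.neighborFinset_eq_filter, SimpleGraph.card_neighborFinset_eq_degree]
  exact (Gt G x ε t).degree_le_ncard_edgeSet i

lemma average_step_mem_Icc {ι : Type*} (N : Finset ι) (y : ι → ℝ) {c lo hi E : ℝ}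
    (hE : 0 < E) (hNE : (N.card : ℝ) ≤ E) (hy : ∀ j ∈ N, y j ∈ Set.Icc lo hi)
    (hc : c ∈ Set.Icc lo hi) :
    1 / E * ∑ j ∈ N, y j + (1 - N.card / E) * c ∈ Set.Icc lo hi := by
  have hlo : N.card * lo ≤ ∑ j ∈ N, y j := by
    simpa [nsmul_eq_mul] using N.card_nsmul_le_sum y lo fun j hj => (hy j hj).1
  have hhi : ∑ j ∈ N, y j ≤ N.card * hi := by
    simpa [nsmul_eq_mul] using N.sum_le_card_nsmul y hi fun j hj => (hy j hj).2
  have hweight : 0 ≤ E - N.card := sub_nonneg.mpr hNE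
  have hform : 1 / E * ∑ j ∈ N, y j + (1 - N.card / E) * c =
      (∑ j ∈ N, y j + (E - N.card) * c) / E := by
    field_simp
  rw [hform, Set.mem_Icc, le_div_iff₀ hE, div_le_iff₀ hE]
  constructor
  · nlinarith [mul_le_mul_of_nonneg_left hc.1 hweight]
  · nlinarith [mul_le_mul_of_nonneg_left hc.2 hweight]

lemma update_mem_Icc {n : ℕ} {G : SimpleGraph (Fin n)} {x : ℕ → Fin n → ℝ} {ε : ℝ}
    (hupd : Update G x ε) {t : ℕ} {lo hi : ℝ} (h : ∀ j, x t j ∈ Set.Icc lo hi) (i : Fin n) :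
    x (t + 1) i ∈ Set.Icc lo hi := by
  rw [hupd t i]
  by_cases hE : (Gt G x ε t).edgeSet.Nonempty
  · simp only [if_pos hE, mul_one]
    have hpos : 0 < Ecard G x ε t := (Set.ncard_pos (Set.toFinite _)).mpr hE
    exact average_step_mem_Icc _ _ (by exact_mod_cast hpos)
      (by exact_mod_cast card_Nb_le_Ecard G x ε t i) (fun j _ => h j) (h i)
  · simpa only [if_neg hE, zero_div, zero_mul, mul_zero, sub_zero, one_mul, zero_add] using h i

lemma update_preserves_trivial {n : ℕ} {G : SimpleGraph (Fin n)} {x : ℕ → Fin n → ℝ} {ε : ℝ}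
    (hupd : Update G x ε) {t : ℕ} (h : ∀ i j, |x t i - x t j| ≤ ε) (i j : Fin n) :
    |x (t + 1) i - x (t + 1) j| ≤ ε := by
  have : Nonempty (Fin n) := ⟨i⟩
  obtain ⟨a, ha⟩ := Finite.exists_min (x t)
  have hband : ∀ k, x t k ∈ Set.Icc (x t a) (x t a + ε) := fun k =>
    ⟨ha k, by linarith [(abs_sub_le_iff.mp (h k a)).1]⟩
  have hi := update_mem_Icc hupd hband i
  have hj := update_mem_Icc hupd hband j
  rw [abs_sub_le_iff]
  constructor <;> linarith [hi.1, hi.2, hj.1, hj.2]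

theorem eps_trivial_full_graph_general {n : ℕ} (G : SimpleGraph (Fin n)) (x : ℕ → Fin n → ℝ)
    (ε : ℝ) (hupd : Update G x ε)
    (s : ℕ) (htriv : ∀ i j, |x s i - x s j| ≤ ε) :
    ∀ t : ℕ, s ≤ t → Gt G x ε t = G := by
  intro t hst
  have htriv_t : ∀ i j, |x t i - x t j| ≤ ε := by
    induction t, hst using Nat.le_induction with
    | base => exact htriv
    | succ m _ ih => exact update_preserves_trivial hupd ih
  ext i j
  exact and_iff_left (htriv_t i j)

/-- If `G_s` is ε-trivial at some time `s`, then `G_t = G` for all `t ≥ s`. -/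
theorem eps_trivial_full_graph {n : ℕ} (G : SimpleGraph (Fin n)) (x : ℕ → Fin n → ℝ)
    (ε : ℝ) (hε : 0 < ε) (hx0 : ∀ i, 0 ≤ x 0 i) (hupd : Update G x ε)
    (s : ℕ) (htriv : ∀ i j, |x s i - x s j| ≤ ε) :
    ∀ t : ℕ, s ≤ t → Gt G x ε t = G :=
  eps_trivial_full_graph_general G x ε hupd s htriv
end
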